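/- Let A be a bounded nonempty subset of an Ahlfors regular metric measure space (X, d, μ) of dimension Q, and let δ > 0. Then for every complex s with Re s > dim̄_B A, the following identity holds: ∫_{A_δ} d(x,A)^{s−Q} dμ(x) = δ^{s−Q} |A_δ| + (Q − s) ∫_0^δ t^{s−Q−1} |A_t| dt. -/

import Mathlib

open MeasureTheory Metric Filter Set Topology ENNReal

noncomputable section

/-- `(X, d, μ)` is an Ahlfors regular metric measure space of dimension `Q`
with regularity constant `K`:  `K⁻¹ r^Q ≤ μ(B̄(x,r)) ≤ K r^Q` for all `x` and
all `0 < r ≤ diam X`. -/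
def IsAhlfors {X : Type*} [MetricSpace X] [MeasurableSpace X] (μ : Measure X)
    (Q K : ℝ) : Prop :=
  1 ≤ K ∧ ∀ (x : X) (r : ℝ), 0 < r → ENNReal.ofReal r ≤ EMetric.diam (univ : Set X) →
    ENNReal.ofReal (K⁻¹ * r ^ Q) ≤ μ (closedBall x r) ∧
      μ (closedBall x r) ≤ ENNReal.ofReal (K * r ^ Q)

/-- The upper `r`-dimensional Minkowski content of `A`, relative to the ambient
dimension `Q`:  `M^{*r}(A) = limsup_{t→0⁺} μ(A_t) / t^(Q-r)`, where
`A_t = cthickening t A` is the closed `t`-neighborhood of `A`. -/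
def uContent {X : Type*} [MetricSpace X] [MeasurableSpace X] (μ : Measure X)
    (Q r : ℝ) (A : Set X) : ℝ≥0∞ :=
  Filter.limsup (fun t : ℝ => μ (cthickening t A) / ENNReal.ofReal (t ^ (Q - r))) (𝓝[>] 0)

/-- The lower `r`-dimensional Minkowski content of `A`. -/
def lContent {X : Type*} [MetricSpace X] [MeasurableSpace X] (μ : Measure X)
    (Q r : ℝ) (A : Set X) : ℝ≥0∞ :=
  Filter.liminf (fun t : ℝ => μ (cthickening t A) / ENNReal.ofReal (t ^ (Q - r))) (𝓝[>] 0)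

/-- The upper Minkowski dimension `dim̄_B A = inf { r ≥ 0 : M^{*r}(A) = 0 }`. -/
def uDimB {X : Type*} [MetricSpace X] [MeasurableSpace X] (μ : Measure X)
    (Q : ℝ) (A : Set X) : ℝ :=
  sInf {r : ℝ | 0 ≤ r ∧ uContent μ Q r A = 0}

/-- The lower Minkowski dimension. -/
def lDimB {X : Type*} [MetricSpace X] [MeasurableSpace X] (μ : Measure X)
    (Q : ℝ) (A : Set X) : ℝ :=
  sInf {r : ℝ | 0 ≤ r ∧ lContent μ Q r A = 0}

/-!
Write `w = s - Q`. For `0 ≤ d ≤ δ` one has `d ^ w = δ ^ w - w ∫_d^δ t ^ (w - 1) dt`, and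
`d(x, A) ≤ t` exactly when `x ∈ A_t`. Integrating over `A_δ` and exchanging the two integrals
turns `∫_{A_δ} d(x, A) ^ w` into `δ ^ w |A_δ| - w ∫_0^δ t ^ (w - 1) |A_t| dt`.
Fubini applies because `Re s > dim̄_B A` provides `r < Re s` with `|A_t| ≤ t ^ (Q - r)` for small
`t`, so that `∫_0^δ t ^ (Re s - Q - 1) |A_t| dt < ∞`, while Ahlfors regularity makes `|A_δ|` finite.
When `Re w ≤ 0` the identity for `d` fails at `d = 0`, but the same integrability, read on the
slice of a.e. `x`, shows that `d(x, A) > 0` for a.e. `x ∈ A_δ`.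
-/

section Ahlfors

variable {X : Type*} [MetricSpace X]

theorem Bornology.IsBounded.exists_subset_closedBall_le_ediam [Nontrivial X] {B : Set X}
    (hB : Bornology.IsBounded B) :
    ∃ x r, 0 < r ∧ ENNReal.ofReal r ≤ ediam (univ : Set X) ∧ B ⊆ closedBall x r := by
  obtain ⟨x⟩ := ‹Nontrivial X›.to_nonempty
  obtain ⟨R, hR⟩ := (isBounded_iff_subset_closedBall x).1 hB
  by_cases hR1 : ENNReal.ofReal (max R 1) ≤ ediam (univ : Set X)
  · exact ⟨x, max R 1, by positivity, hR1,
      hR.trans (closedBall_subset_closedBall (le_max_left _ _))⟩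
  · have hD : ediam (univ : Set X) ≠ ⊤ := ne_top_of_lt (not_le.1 hR1)
    have hpos : 0 < ediam (univ : Set X) := by
      obtain ⟨y, z, hyz⟩ := exists_pair_ne X
      exact Metric.ediam_pos_iff'.2 ⟨y, mem_univ y, z, mem_univ z, hyz⟩
    refine ⟨x, (ediam (univ : Set X)).toReal, ENNReal.toReal_pos hpos.ne' hD,
      (ENNReal.ofReal_toReal hD).le, fun y _ => ?_⟩
    exact mem_closedBall.2 (dist_le_diam_of_mem (isBounded_iff_ediam_ne_top.2 hD)
      (mem_univ y) (mem_univ x))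

theorem IsAhlfors.measure_ne_top [MeasurableSpace X] [Nontrivial X] {μ : Measure X} {Q K : ℝ}
    (hμ : IsAhlfors μ Q K) {B : Set X} (hB : Bornology.IsBounded B) : μ B ≠ ⊤ := by
  obtain ⟨x, r, hr, hrD, hBr⟩ := hB.exists_subset_closedBall_le_ediam
  exact ne_top_of_le_ne_top ofReal_ne_top ((measure_mono hBr).trans (hμ.2 x r hr hrD).2)

end Ahlfors

section MinkowskiContent

variable {X : Type*} [MetricSpace X] [MeasurableSpace X] {μ : Measure X} {Q r : ℝ} {A : Set X}

theorem tendsto_ofReal_rpow_nhdsGT_zero {e : ℝ} (he : 0 < e) :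
    Tendsto (fun t : ℝ => ENNReal.ofReal (t ^ e)) (𝓝[>] 0) (𝓝 0) := by
  have h : Tendsto (fun t : ℝ => t ^ e) (𝓝[>] 0) (𝓝 ((0 : ℝ) ^ e)) :=
    (Real.continuousAt_rpow_const 0 e (Or.inr he.le)).tendsto.mono_left nhdsWithin_le_nhds
  rw [Real.zero_rpow he.ne'] at h
  simpa using ENNReal.tendsto_ofReal h

theorem uContent_eq_zero_of_lt {δ : ℝ} (hδ : 0 < δ) (hAδ : μ (cthickening δ A) ≠ ⊤)
    (hQr : Q < r) : uContent μ Q r A = 0 := by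
  have hbound : ∀ᶠ t in 𝓝[>] (0 : ℝ), μ (cthickening t A) / ENNReal.ofReal (t ^ (Q - r))
      ≤ μ (cthickening δ A) * ENNReal.ofReal (t ^ (r - Q)) := by
    filter_upwards [Ioo_mem_nhdsGT hδ] with t ht
    rw [div_eq_mul_inv, ← ENNReal.ofReal_inv_of_pos (Real.rpow_pos_of_pos ht.1 _),
      ← Real.rpow_neg ht.1.le, neg_sub]
    gcongr
    exact cthickening_mono ht.2.le A
  have hlim := ENNReal.Tendsto.const_mul (tendsto_ofReal_rpow_nhdsGT_zero (sub_pos.2 hQr))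
    (Or.inr hAδ)
  rw [mul_zero] at hlim
  exact (tendsto_of_tendsto_of_tendsto_of_le_of_le' tendsto_const_nhds hlim
    (Eventually.of_forall fun _ => zero_le) hbound).limsup_eq

theorem eventually_measure_cthickening_le_of_uContent_eq_zero (h : uContent μ Q r A = 0) :
    ∀ᶠ t in 𝓝[>] (0 : ℝ), μ (cthickening t A) ≤ ENNReal.ofReal (t ^ (Q - r)) := by
  have hlt : uContent μ Q r A < 1 := h ▸ zero_lt_one
  filter_upwards [eventually_lt_of_limsup_lt hlt, self_mem_nhdsWithin] with t ht ht0
  have hpos : ENNReal.ofReal (t ^ (Q - r)) ≠ 0 :=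
    (ENNReal.ofReal_pos.2 (Real.rpow_pos_of_pos ht0 _)).ne'
  simpa using ((ENNReal.div_lt_iff (Or.inl hpos) (Or.inl ofReal_ne_top)).1 ht).le

theorem exists_lt_uContent_eq_zero {δ : ℝ} (hδ : 0 < δ) (hAδ : μ (cthickening δ A) ≠ ⊤)
    {a : ℝ} (ha : uDimB μ Q A < a) : ∃ r < a, uContent μ Q r A = 0 := by
  have hne : {r : ℝ | 0 ≤ r ∧ uContent μ Q r A = 0}.Nonempty :=
    ⟨max Q 0 + 1, by positivity,
      uContent_eq_zero_of_lt hδ hAδ (by linarith [le_max_left Q 0])⟩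
  obtain ⟨r, ⟨-, hr⟩, hra⟩ := (csInf_lt_iff ⟨0, fun _ h => h.1⟩ hne).1 ha
  exact ⟨r, hra, hr⟩

end MinkowskiContent

theorem lintegral_rpow_mul_lt_top_of_le_rpow {g : ℝ → ℝ≥0∞} (hg : Monotone g) {a b δ : ℝ}
    (hgδ : g δ ≠ ⊤) (hab : 0 < a + b)
    (hgb : ∀ᶠ t in 𝓝[>] (0 : ℝ), g t ≤ ENNReal.ofReal (t ^ b)) :
    ∫⁻ t in Ioc 0 δ, ENNReal.ofReal (t ^ (a - 1)) * g t < ⊤ := by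
  obtain ⟨u, hu : 0 < u, hub⟩ := mem_nhdsGT_iff_exists_Ioc_subset.1 hgb
  have near_zero : ∫⁻ t in Ioc 0 u, ENNReal.ofReal (t ^ (a - 1)) * g t < ⊤ :=
    calc ∫⁻ t in Ioc 0 u, ENNReal.ofReal (t ^ (a - 1)) * g t
        ≤ ∫⁻ t in Ioc 0 u, ENNReal.ofReal (t ^ (a + b - 1)) := by
          refine setLIntegral_mono' measurableSet_Ioc fun t ht => ?_
          calc ENNReal.ofReal (t ^ (a - 1)) * g t
              ≤ ENNReal.ofReal (t ^ (a - 1)) * ENNReal.ofReal (t ^ b) := by gcongr; exact hub ht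
            _ = ENNReal.ofReal (t ^ (a + b - 1)) := by
              rw [← ENNReal.ofReal_mul (Real.rpow_nonneg ht.1.le _), ← Real.rpow_add ht.1]
              ring_nf
      _ < ⊤ := (intervalIntegral.intervalIntegrable_rpow' (by linarith) (a := 0) (b := u)).1
          |>.lintegral_lt_top
  have away_from_zero : ∫⁻ t in Ioc u δ, ENNReal.ofReal (t ^ (a - 1)) * g t < ⊤ :=
    calc ∫⁻ t in Ioc u δ, ENNReal.ofReal (t ^ (a - 1)) * g t
        ≤ ∫⁻ t in Ioc u δ, ENNReal.ofReal (t ^ (a - 1)) * g δ :=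
          setLIntegral_mono' measurableSet_Ioc fun t ht => by gcongr; exact hg ht.2
      _ < ⊤ := by
          rw [lintegral_mul_const' _ _ hgδ]
          refine mul_lt_top ?_ hgδ.lt_top
          exact ((continuousOn_id.rpow_const fun t ht => Or.inl (hu.trans_le ht.1).ne')
            |>.integrableOn_Icc |>.mono_set Ioc_subset_Icc_self).lintegral_lt_top
  calc ∫⁻ t in Ioc 0 δ, ENNReal.ofReal (t ^ (a - 1)) * g t
      ≤ ∫⁻ t in Ioc 0 u ∪ Ioc u δ, ENNReal.ofReal (t ^ (a - 1)) * g t :=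
        lintegral_mono_set Ioc_subset_Ioc_union_Ioc
    _ ≤ _ := lintegral_union_le _ _ _
    _ < ⊤ := add_lt_top.2 ⟨near_zero, away_from_zero⟩

theorem mul_integral_indicator_Icc_cpow {w : ℂ} {d δ : ℝ} (hd : 0 ≤ d) (hdδ : d ≤ δ)
    (hint : IntegrableOn ((Icc d δ).indicator fun t : ℝ => (t : ℂ) ^ (w - 1)) (Ioc 0 δ)) :
    w * ∫ t in Ioc 0 δ, (Icc d δ).indicator (fun t : ℝ => (t : ℂ) ^ (w - 1)) t
      = (δ : ℂ) ^ w - (d : ℂ) ^ w := by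
  have hset : (Ioc 0 δ ∩ Icc d δ : Set ℝ) =ᵐ[volume] Ioc d δ := by
    rcases hd.eq_or_lt with rfl | hd0
    · rw [inter_eq_left.2 Ioc_subset_Icc_self]
      exact .rfl
    · have hsub : Icc d δ ⊆ Ioc 0 δ := fun t ht => ⟨hd0.trans_le ht.1, ht.2⟩
      rw [inter_eq_right.2 hsub]
      exact Ioc_ae_eq_Icc.symm
  rw [integrableOn_indicator_iff measurableSet_Icc, inter_comm,
    integrableOn_congr_set_ae hset] at hint
  rw [setIntegral_indicator measurableSet_Icc, setIntegral_congr_set hset,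
    ← intervalIntegral.integral_of_le hdδ]
  rcases eq_or_ne w 0 with rfl | hw
  · simp
  rcases hdδ.eq_or_lt with rfl | hdδ'
  · simp
  have hexp : -1 < (w - 1).re ∨ w - 1 ≠ -1 ∧ (0 : ℝ) ∉ uIcc d δ := by
    rcases hd.eq_or_lt with rfl | hd0
    · left
      exact (intervalIntegral.integrableOn_Ioo_cpow_iff hdδ').1 (hint.mono_set Ioo_subset_Ioc_self)
    · right
      refine ⟨fun h => hw (by linear_combination h), fun h => ?_⟩
      rw [uIcc_of_le hdδ] at h
      exact absurd h.1 (not_le.2 hd0)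
  rw [integral_cpow hexp, sub_add_cancel]
  field_simp

section LayerCake

variable {X : Type*} [MetricSpace X] {A : Set X}

theorem mem_cthickening_iff_infDist_le (hA : A.Nonempty) {t : ℝ} (ht : 0 ≤ t) {x : X} :
    x ∈ cthickening t A ↔ infDist x A ≤ t := by
  rw [mem_cthickening_iff, infDist, ← ENNReal.le_ofReal_iff_toReal_le (infEDist_ne_top hA) ht]

theorem indicator_Icc_infDist_eq_indicator_cthickening {E : Type*} [Zero E] (hA : A.Nonempty)
    {t δ : ℝ} (ht : 0 ≤ t) (htδ : t ≤ δ) (f : ℝ → E) (x : X) :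
    (Icc (infDist x A) δ).indicator f t = (cthickening t A).indicator (fun _ => f t) x := by
  by_cases h : infDist x A ≤ t
  · rw [indicator_of_mem (mem_Icc.2 ⟨h, htδ⟩),
      indicator_of_mem ((mem_cthickening_iff_infDist_le hA ht).2 h)]
  · rw [indicator_of_notMem fun h' => h h'.1,
      indicator_of_notMem fun h' => h ((mem_cthickening_iff_infDist_le hA ht).1 h')]

variable [MeasurableSpace X] [OpensMeasurableSpace X]

theorem measurable_indicator_Icc_infDist {E : Type*} [MeasurableSpace E] [Zero E] {f : ℝ → E}
    (hf : Measurable f) (A : Set X) (δ : ℝ) :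
    Measurable (Function.uncurry fun x => (Icc (infDist x A) δ).indicator f) := by
  have hcl : IsClosed {p : X × ℝ | infDist p.1 A ≤ p.2 ∧ p.2 ≤ δ} :=
    (isClosed_le (continuous_infDist_pt A).fst' continuous_snd).inter
      (isClosed_le continuous_snd continuous_const)
  exact (hf.comp measurable_snd).indicator hcl.measurableSet

variable {μ : Measure X} {δ : ℝ} {w : ℂ}

theorem integrable_indicator_Icc_infDist_cpow (hA : A.Nonempty)
    (hAδ : μ (cthickening δ A) ≠ ⊤)
    (hfin : ∫⁻ t in Ioc 0 δ, ENNReal.ofReal (t ^ (w.re - 1)) * μ (cthickening t A) < ⊤) :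
    Integrable (Function.uncurry fun x => (Icc (infDist x A) δ).indicator
        fun t : ℝ => (t : ℂ) ^ (w - 1))
      ((μ.restrict (cthickening δ A)).prod (volume.restrict (Ioc 0 δ))) := by
  have : IsFiniteMeasure (μ.restrict (cthickening δ A)) := isFiniteMeasure_restrict.2 hAδ
  have hFm := measurable_indicator_Icc_infDist
    (f := fun t : ℝ => (t : ℂ) ^ (w - 1)) (by fun_prop) A δ
  refine ⟨hFm.aestronglyMeasurable, ?_⟩
  rw [hasFiniteIntegral_iff_enorm, lintegral_prod_symm _ hFm.enorm.aemeasurable]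
  refine lt_of_eq_of_lt (setLIntegral_congr_fun measurableSet_Ioc fun t ht => ?_) hfin
  have hAt : MeasurableSet (cthickening t A) := isClosed_cthickening.measurableSet
  simp only [Function.uncurry_apply_pair,
    indicator_Icc_infDist_eq_indicator_cthickening hA ht.1.le ht.2,
    enorm_indicator_eq_indicator_enorm]
  rw [lintegral_indicator_const hAt, Measure.restrict_apply hAt,
    inter_eq_left.2 (cthickening_mono ht.2 A), ← ofReal_norm,
    Complex.norm_cpow_eq_rpow_re_of_pos ht.1, Complex.sub_re, Complex.one_re]

theorem setIntegral_cthickening_infDist_cpow (hA : A.Nonempty) (hδ : 0 < δ)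
    (hAδ : μ (cthickening δ A) ≠ ⊤)
    (hfin : ∫⁻ t in Ioc 0 δ, ENNReal.ofReal (t ^ (w.re - 1)) * μ (cthickening t A) < ⊤) :
    ∫ x in cthickening δ A, (infDist x A : ℂ) ^ w ∂μ
      = (δ : ℂ) ^ w * (μ (cthickening δ A)).toReal
        - w * ∫ t in Ioc 0 δ, (t : ℂ) ^ (w - 1) * (μ (cthickening t A)).toReal := by
  set F : X → ℝ → ℂ := fun x => (Icc (infDist x A) δ).indicator fun t => (t : ℂ) ^ (w - 1)
  have hAm : ∀ t, MeasurableSet (cthickening t A) := fun t => isClosed_cthickening.measurableSet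
  have : IsFiniteMeasure (μ.restrict (cthickening δ A)) := isFiniteMeasure_restrict.2 hAδ
  have hF := integrable_indicator_Icc_infDist_cpow hA hAδ hfin
  have hftc : ∀ᵐ x ∂μ.restrict (cthickening δ A),
      (infDist x A : ℂ) ^ w = (δ : ℂ) ^ w - w * ∫ t in Ioc 0 δ, F x t := by
    filter_upwards [hF.prod_right_ae, ae_restrict_mem (hAm δ)] with x hxint hx
    rw [mul_integral_indicator_Icc_cpow infDist_nonneg
      ((mem_cthickening_iff_infDist_le hA hδ.le).1 hx) hxint]
    ring
  have hswap : ∫ x in cthickening δ A, (∫ t in Ioc 0 δ, F x t) ∂μ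
      = ∫ t in Ioc 0 δ, (t : ℂ) ^ (w - 1) * (μ (cthickening t A)).toReal := by
    rw [integral_integral_swap hF]
    refine setIntegral_congr_fun measurableSet_Ioc fun t ht => ?_
    simp only [indicator_Icc_infDist_eq_indicator_cthickening hA ht.1.le ht.2]
    rw [integral_indicator_const _ (hAm t), measureReal_restrict_apply (hAm t),
      inter_eq_left.2 (cthickening_mono ht.2 A), Complex.real_smul, mul_comm, measureReal_def]
  have hG : Integrable (fun x => ∫ t in Ioc 0 δ, F x t) (μ.restrict (cthickening δ A)) :=
    hF.integral_prod_left
  rw [integral_congr_ae hftc, integral_sub (integrable_const _) (hG.const_mul w),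
    integral_const_mul, hswap, integral_const, Complex.real_smul,
    measureReal_restrict_apply_univ, measureReal_def, mul_comm]

end LayerCake

theorem stmt9_general {X : Type*} [MetricSpace X] [MeasurableSpace X] [BorelSpace X]
    (μ : Measure X) (Q K : ℝ) (hreg : IsAhlfors μ Q K)
    (A : Set X) (hne : A.Nonempty) (hbd : Bornology.IsBounded A)
    (δ : ℝ) (hδ : 0 < δ) (s : ℂ) (hs : uDimB μ Q A < s.re) :
    ∫ x in cthickening δ A, (infDist x A : ℂ) ^ (s - (Q : ℂ)) ∂μ
      = (δ : ℂ) ^ (s - (Q : ℂ)) * ((μ (cthickening δ A)).toReal : ℂ)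
        + ((Q : ℂ) - s) * ∫ t in Ioc (0:ℝ) δ,
            (t : ℂ) ^ (s - (Q : ℂ) - 1) * ((μ (cthickening t A)).toReal : ℂ) := by
  by_cases hAδ : μ (cthickening δ A) = ⊤
  · -- `X` is a point of infinite mass, and both sides vanish since `(⊤ : ℝ≥0∞).toReal = 0`.
    have : Subsingleton X := not_nontrivial_iff_subsingleton.1 fun _ =>
      hreg.measure_ne_top hbd.cthickening hAδ
    have hA : A = univ := Subsingleton.eq_univ_of_nonempty hne
    have hAt (t : ℝ) : cthickening t A = univ :=
      eq_univ_of_univ_subset (hA ▸ self_subset_cthickening A)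
    rw [hAt] at hAδ
    have hdist (x : X) : infDist x A = 0 := infDist_zero_of_mem (hA ▸ mem_univ x)
    simp [hAt, hdist, hAδ, measureReal_def]
  obtain ⟨r, hrs, hr⟩ := exists_lt_uContent_eq_zero hδ hAδ hs
  have hfin := lintegral_rpow_mul_lt_top_of_le_rpow (a := s.re - Q) (b := Q - r)
    (fun _ _ h => measure_mono (cthickening_mono h A)) hAδ (by linarith)
    (eventually_measure_cthickening_le_of_uContent_eq_zero hr)
  rw [setIntegral_cthickening_infDist_cpow hne hδ hAδ (w := s - Q) (by simpa using hfin)]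
  ring

/-- For every complex `s` with `Re s > dim̄_B A`,
`∫_{A_δ} d(x,A)^(s-Q) dμ = δ^(s-Q) |A_δ| + (Q-s) ∫_0^δ t^(s-Q-1) |A_t| dt`. -/
theorem stmt9 {X : Type*} [MetricSpace X] [MeasurableSpace X] [BorelSpace X]
    (μ : Measure X) (Q K : ℝ) (hQ : 0 < Q) (hreg : IsAhlfors μ Q K)
    (A : Set X) (hne : A.Nonempty) (hbd : Bornology.IsBounded A)
    (δ : ℝ) (hδ : 0 < δ) (s : ℂ) (hs : uDimB μ Q A < s.re) :
    ∫ x in cthickening δ A, (infDist x A : ℂ) ^ (s - (Q : ℂ)) ∂μ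
      = (δ : ℂ) ^ (s - (Q : ℂ)) * ((μ (cthickening δ A)).toReal : ℂ)
        + ((Q : ℂ) - s) * ∫ t in Ioc (0:ℝ) δ,
            (t : ℂ) ^ (s - (Q : ℂ) - 1) * ((μ (cthickening t A)).toReal : ℂ) :=
  stmt9_general μ Q K hreg A hne hbd δ hδ s hs

end
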